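/- Let K ⊆ ℝⁿ be a nonempty closed set, f = (f_1,…,f_q) a vector polynomial, x̄ ∈ K, and I a nonempty subset of {1,…,q}. If f_i is bounded from below on K_x̄ for every i ∈ I, then 0 ∈ SOL^w((K_x̄)_∞, f^∞). If f_i is bounded from below on K_x̄ for every i ∈ {1,…,q}, then 0 ∈ SOL^s((K_x̄)_∞, f^∞). -/

import Mathlib

open Filter Topology MvPolynomial Bornology

noncomputable section

/-- The asymptotic (recession) cone of a set `A ⊆ ℝⁿ`. -/
def asymCone {n : ℕ} (A : Set (Fin n → ℝ)) : Set (Fin n → ℝ) :=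
  {v | ∃ (t : ℕ → ℝ) (x : ℕ → (Fin n → ℝ)),
    Filter.Tendsto t Filter.atTop Filter.atTop ∧ (∀ k, x k ∈ A) ∧
    Filter.Tendsto (fun k => (t k)⁻¹ • x k) Filter.atTop (nhds v)}

/-- Pareto efficient solutions of the vector map `g` on `C`. -/
def SOLs {n q : ℕ} (C : Set (Fin n → ℝ)) (g : Fin q → (Fin n → ℝ) → ℝ) :
    Set (Fin n → ℝ) :=
  {x | x ∈ C ∧ ¬ ∃ y ∈ C, (∀ i, g i y ≤ g i x) ∧ (∃ i, g i y ≠ g i x)}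

/-- Weak Pareto efficient solutions of the vector map `g` on `C`. -/
def SOLw {n q : ℕ} (C : Set (Fin n → ℝ)) (g : Fin q → (Fin n → ℝ) → ℝ) :
    Set (Fin n → ℝ) :=
  {x | x ∈ C ∧ ¬ ∃ y ∈ C, ∀ i, g i y < g i x}

/-- Global minimizers of a scalar function `p` on `C`. -/
def SOLmin {n : ℕ} (C : Set (Fin n → ℝ)) (p : (Fin n → ℝ) → ℝ) :
    Set (Fin n → ℝ) :=
  {x | x ∈ C ∧ ∀ y ∈ C, p x ≤ p y}

/-- The recession polynomial (leading term: top-degree homogeneous part) of a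
polynomial, as a function on `ℝⁿ`. -/
noncomputable def recPoly {n : ℕ} (p : MvPolynomial (Fin n) ℝ) : (Fin n → ℝ) → ℝ :=
  fun x => MvPolynomial.eval x (MvPolynomial.homogeneousComponent p.totalDegree p)

/-!
If `p` has degree `d` and `x k ∈ S`, `x k / t k → y` with `t k → ∞`, then
`p (x k) / (t k) ^ d → p^∞ y`, because `s ^ d * p (w / s)` extends continuously to `s = 0`
with value `p^∞ w`. A lower bound `m` of `p` on `S` therefore gives
`p^∞ y ≥ lim m / (t k) ^ d = 0 = p^∞ 0` when `d ≥ 1` (and `p^∞` is constant when `d = 0`).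
So `0` minimizes every bounded-below `f_i^∞` over the asymptotic cone of the sublevel set,
and a point minimizing one objective is weakly efficient, while one minimizing all of them is
efficient.
-/

lemma MvPolynomial.IsHomogeneous.eval_smul {σ R : Type*} [CommSemiring R]
    {φ : MvPolynomial σ R} {j : ℕ} (hφ : φ.IsHomogeneous j) (c : R) (x : σ → R) :
    eval (c • x) φ = c ^ j * eval x φ := by
  rw [eval_eq, eval_eq, Finset.mul_sum]
  refine Finset.sum_congr rfl fun d hd => ?_
  have hdeg : d.degree = j := by
    by_contra h
    exact mem_support_iff.mp hd (hφ.coeff_eq_zero h)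
  simp only [Pi.smul_apply, smul_eq_mul, mul_pow, Finset.prod_mul_distrib,
    Finset.prod_pow_eq_pow_sum, ← hdeg, Finsupp.degree_apply]
  ring

variable {n : ℕ}

lemma recPoly_smul (p : MvPolynomial (Fin n) ℝ) (c : ℝ) (x : Fin n → ℝ) :
    recPoly p (c • x) = c ^ p.totalDegree * recPoly p x :=
  (homogeneousComponent_isHomogeneous _ p).eval_smul c x

lemma inv_pow_totalDegree_mul_eval_smul (p : MvPolynomial (Fin n) ℝ) {c : ℝ} (hc : c ≠ 0)
    (w : Fin n → ℝ) :
    c⁻¹ ^ p.totalDegree * eval (c • w) p =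
      ∑ j ∈ Finset.range (p.totalDegree + 1),
        c⁻¹ ^ (p.totalDegree - j) * eval w (homogeneousComponent j p) := by
  conv_lhs => arg 2; rw [← sum_homogeneousComponent p]
  rw [map_sum, Finset.mul_sum]
  refine Finset.sum_congr rfl fun j hj => ?_
  rw [(homogeneousComponent_isHomogeneous j p).eval_smul,
    pow_sub₀ _ (inv_ne_zero hc) (Finset.mem_range_succ_iff.mp hj), inv_pow c j, inv_inv]
  ring

lemma tendsto_inv_pow_totalDegree_mul_eval {ι : Type*} {l : Filter ι}
    (p : MvPolynomial (Fin n) ℝ) {t : ι → ℝ} {x : ι → Fin n → ℝ} {y : Fin n → ℝ}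
    (ht : Tendsto t l atTop) (hxy : Tendsto (fun k => (t k)⁻¹ • x k) l (𝓝 y)) :
    Tendsto (fun k => (t k)⁻¹ ^ p.totalDegree * eval (x k) p) l (𝓝 (recPoly p y)) := by
  set d := p.totalDegree
  set G : ℝ × (Fin n → ℝ) → ℝ := fun sw =>
    ∑ j ∈ Finset.range (d + 1), sw.1 ^ (d - j) * eval sw.2 (homogeneousComponent j p)
  have hG : Continuous G := by
    refine continuous_finsetSum _ fun j _ => ?_
    exact (continuous_fst.pow _).mul ((continuous_eval _).comp continuous_snd)
  have hG0 : G (0, y) = recPoly p y := by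
    simp only [G]
    rw [Finset.sum_eq_single_of_mem d (Finset.self_mem_range_succ d)]
    · simp [recPoly, d]
    · intro j hj hjd
      rw [zero_pow (by have := Finset.mem_range_succ_iff.mp hj; omega), zero_mul]
  have hlim := (hG.tendsto (0, y)).comp (ht.inv_tendsto_atTop.prodMk_nhds hxy)
  rw [hG0] at hlim
  refine hlim.congr' ?_
  filter_upwards [ht.eventually_ne_atTop 0] with k hk
  calc G ((t k)⁻¹, (t k)⁻¹ • x k) = (t k)⁻¹ ^ d * eval (t k • (t k)⁻¹ • x k) p :=
        (inv_pow_totalDegree_mul_eval_smul p hk _).symm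
    _ = (t k)⁻¹ ^ d * eval (x k) p := by rw [smul_inv_smul₀ hk]

lemma recPoly_zero_le_of_mem_asymCone {S : Set (Fin n → ℝ)} {p : MvPolynomial (Fin n) ℝ}
    {m : ℝ} (hm : ∀ x ∈ S, m ≤ eval x p) {y : Fin n → ℝ} (hy : y ∈ asymCone S) :
    recPoly p 0 ≤ recPoly p y := by
  have h0 : recPoly p 0 = 0 ^ p.totalDegree * recPoly p y := by
    rw [← recPoly_smul, zero_smul]
  obtain hd | hd := eq_or_ne p.totalDegree 0
  · simp [h0, hd]
  obtain ⟨t, x, ht, hxS, hxy⟩ := hy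
  rw [h0, zero_pow hd, zero_mul]
  have hlow : Tendsto (fun k => (t k)⁻¹ ^ p.totalDegree * m) atTop (𝓝 0) := by
    simpa [zero_pow hd] using (ht.inv_tendsto_atTop.pow p.totalDegree).mul_const m
  refine le_of_tendsto_of_tendsto hlow (tendsto_inv_pow_totalDegree_mul_eval p ht hxy) ?_
  filter_upwards [ht.eventually_ge_atTop 0] with k hk
  exact mul_le_mul_of_nonneg_left (hm _ (hxS k)) (by positivity)

lemma zero_mem_asymCone {A : Set (Fin n → ℝ)} (hA : A.Nonempty) : (0 : Fin n → ℝ) ∈ asymCone A := by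
  obtain ⟨a, ha⟩ := hA
  refine ⟨fun k => (k : ℝ), fun _ => a, tendsto_natCast_atTop_atTop, fun _ => ha, ?_⟩
  simpa using (tendsto_inv_atTop_zero.comp (tendsto_natCast_atTop_atTop (R := ℝ))).smul_const a

variable {q : ℕ} {C : Set (Fin n → ℝ)} {g : Fin q → (Fin n → ℝ) → ℝ} {x : Fin n → ℝ}

lemma mem_SOLw_of_mem_SOLmin (i : Fin q) (h : x ∈ SOLmin C (g i)) : x ∈ SOLw C g :=
  ⟨h.1, fun ⟨y, hy, hlt⟩ => (hlt i).not_ge (h.2 y hy)⟩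

lemma mem_SOLs_of_forall_mem_SOLmin (hx : x ∈ C) (h : ∀ i, x ∈ SOLmin C (g i)) :
    x ∈ SOLs C g :=
  ⟨hx, fun ⟨y, hy, hle, i, hne⟩ => hne ((hle i).antisymm ((h i).2 y hy))⟩

theorem stmt3_general {n q : ℕ} (K : Set (Fin n → ℝ))
    (f : Fin q → MvPolynomial (Fin n) ℝ)
    (xbar : Fin n → ℝ) (hx : xbar ∈ K)
    (I : Finset (Fin q)) (hI : I.Nonempty) :
    ((∀ i ∈ I, ∃ m : ℝ, ∀ x ∈ {x ∈ K | ∀ j, eval x (f j) ≤ eval xbar (f j)},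
        m ≤ eval x (f i)) →
      (0 : Fin n → ℝ) ∈ SOLw (asymCone {x ∈ K | ∀ j, eval x (f j) ≤ eval xbar (f j)})
        (fun i => recPoly (f i))) ∧
    ((∀ i, ∃ m : ℝ, ∀ x ∈ {x ∈ K | ∀ j, eval x (f j) ≤ eval xbar (f j)},
        m ≤ eval x (f i)) →
      (0 : Fin n → ℝ) ∈ SOLs (asymCone {x ∈ K | ∀ j, eval x (f j) ≤ eval xbar (f j)})
        (fun i => recPoly (f i))) := by
  set S := {x ∈ K | ∀ j, eval x (f j) ≤ eval xbar (f j)}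
  have h0 : (0 : Fin n → ℝ) ∈ asymCone S := zero_mem_asymCone ⟨xbar, hx, fun _ => le_rfl⟩
  have hmin : ∀ i, (∃ m : ℝ, ∀ x ∈ S, m ≤ eval x (f i)) →
      (0 : Fin n → ℝ) ∈ SOLmin (asymCone S) (recPoly (f i)) :=
    fun i ⟨_, hm⟩ => ⟨h0, fun _ hy => recPoly_zero_le_of_mem_asymCone hm hy⟩
  refine ⟨fun hb => ?_, fun hb => mem_SOLs_of_forall_mem_SOLmin h0 fun i => hmin i (hb i)⟩
  obtain ⟨i, hi⟩ := hI
  exact mem_SOLw_of_mem_SOLmin i (hmin i (hb i hi))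

theorem stmt3 {n q : ℕ} (K : Set (Fin n → ℝ)) (hKne : K.Nonempty) (hKcl : IsClosed K)
    (f : Fin q → MvPolynomial (Fin n) ℝ) (hdeg : ∀ i, 1 ≤ (f i).totalDegree)
    (xbar : Fin n → ℝ) (hx : xbar ∈ K)
    (I : Finset (Fin q)) (hI : I.Nonempty) :
    ((∀ i ∈ I, ∃ m : ℝ, ∀ x ∈ {x ∈ K | ∀ j, eval x (f j) ≤ eval xbar (f j)},
        m ≤ eval x (f i)) →
      (0 : Fin n → ℝ) ∈ SOLw (asymCone {x ∈ K | ∀ j, eval x (f j) ≤ eval xbar (f j)})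
        (fun i => recPoly (f i))) ∧
    ((∀ i, ∃ m : ℝ, ∀ x ∈ {x ∈ K | ∀ j, eval x (f j) ≤ eval xbar (f j)},
        m ≤ eval x (f i)) →
      (0 : Fin n → ℝ) ∈ SOLs (asymCone {x ∈ K | ∀ j, eval x (f j) ≤ eval xbar (f j)})
        (fun i => recPoly (f i))) :=
  stmt3_general K f xbar hx I hI
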